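/- In a parking game, the marginal displacement of any single car joining a coalition is given by contiguous occupied blocks: if after the cars in S park, the preference spot a_i lies in a maximal contiguous block of occupied spots ending at spot t, then c_α(S ∪ {i}) - c_α(S) = t - a_i + 1; if spot a_i is unoccupied, then c_α(S ∪ {i}) = c_α(S). -/

import Mathlib

/-- Sequential parking process on a street with `m` spots: given the list of
preferences of the cars (in arrival order) and the set of already occupied
spots, return the list of spots in which the cars park (in arrival order),
or `none` if some car fails to park. Car with preference `a` parks in the
first unoccupied spot `j` with `a ≤ j ≤ m`. -/
def park (m : ℕ) : List ℕ → Finset ℕ → Option (List ℕ)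
  | [], _ => some []
  | a :: as, occ =>
    match ((List.range' a (m + 1 - a)).filter fun j => decide (j ∉ occ)).head? with
    | none => none
    | some p => (park m as (insert p occ)).map (p :: ·)

/-- `α` is an `(n, m)`-parking function: `n` cars with preferences in `[m]`,
all of which park successfully. -/
def IsPF (n m : ℕ) (α : List ℕ) : Prop :=
  α.length = n ∧ (∀ a ∈ α, 1 ≤ a ∧ a ≤ m) ∧ (park m α ∅).isSome

/-- Total displacement: the sum over cars of (parking spot − preference). -/
def disp (m : ℕ) (α : List ℕ) : ℕ :=
  match park m α ∅ with
  | some ps => ((ps.zip α).map fun x => x.1 - x.2).sum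
  | none => 0

/-- The set of spots occupied at the end of the parking process. -/
def occSet (m : ℕ) (α : List ℕ) : Finset ℕ :=
  match park m α ∅ with
  | some ps => ps.toFinset
  | none => ∅

/-- The characteristic function of the parking game of `α`: the total
displacement of the sub-tuple of preferences indexed by the coalition `S`,
parked on a street with `n` spots. -/
def gameCost (n : ℕ) (α : Fin n → ℕ) (S : Finset (Fin n)) : ℕ :=
  disp n ((S.sort (· ≤ ·)).map α)

/-- The Shapley value of a coalitional cost game `c` on players `Fin n`. -/
noncomputable def shapley (n : ℕ) (c : Finset (Fin n) → ℕ) (i : Fin n) : ℚ :=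
  (1 / (n.factorial : ℚ)) * ∑ π : Equiv.Perm (Fin n),
    ((c (Finset.univ.filter fun j => π j ≤ π i) : ℚ) -
     (c (Finset.univ.filter fun j => π j < π i) : ℚ))

/-! The outcome of a parking run (the set of filled spots and the total displacement) does not
depend on the arrival order: when two adjacent cars are swapped they either take the same two
spots, or both aim at the same first free spot `p` and the later one then goes on to the first
free spot after `p`, whichever of them it is. Hence car `i` may be taken to arrive after the
cars of `S`; it parks at the first free spot at or after `a_i`, which is `a_i` or `t + 1`, and
adds exactly that distance to the displacement. It does park, because every sub-tuple of a
parking function is one. -/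

def firstFree (m a : ℕ) (occ : Finset ℕ) : Option ℕ :=
  ((List.range' a (m + 1 - a)).filter fun j => decide (j ∉ occ)).head?

theorem park_cons (m a : ℕ) (as : List ℕ) (occ : Finset ℕ) :
    park m (a :: as) occ =
      (firstFree m a occ).bind fun p => (park m as (insert p occ)).map (p :: ·) := by
  rw [park, firstFree]
  cases ((List.range' a (m + 1 - a)).filter fun j => decide (j ∉ occ)).head? <;> rfl

section FirstFree

variable {m a p : ℕ} {occ : Finset ℕ}

theorem firstFree_eq_some_iff :
    firstFree m a occ = some p ↔
      a ≤ p ∧ p ≤ m ∧ p ∉ occ ∧ ∀ j, a ≤ j → j < p → j ∈ occ := by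
  simp only [firstFree, List.head?_filter, List.find?_range'_eq_some, List.mem_range'_1,
    decide_eq_true_eq, Bool.not_eq_true', decide_eq_false_iff_not, not_not]
  constructor
  · rintro ⟨hp, ⟨hap, hpm⟩, hbelow⟩
    exact ⟨hap, by omega, hp, hbelow⟩
  · rintro ⟨hap, hpm, hp, hbelow⟩
    exact ⟨hp, ⟨hap, by omega⟩, hbelow⟩

theorem firstFree_eq_none_iff :
    firstFree m a occ = none ↔ ∀ j, a ≤ j → j ≤ m → j ∈ occ := by
  simp only [firstFree, List.head?_filter, List.find?_range'_eq_none,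
    Bool.not_eq_true', decide_eq_false_iff_not, not_not]
  exact forall_congr' fun j =>
    ⟨fun h h₁ h₂ => h h₁ (by omega), fun h h₁ h₂ => h h₁ (by omega)⟩

theorem firstFree_eq_none_of_subset {occ' : Finset ℕ} (hsub : occ ⊆ occ')
    (h : firstFree m a occ = none) : firstFree m a occ' = none := by
  rw [firstFree_eq_none_iff] at h ⊢
  exact fun j h₁ h₂ => hsub (h j h₁ h₂)

theorem exists_firstFree_of_subset {occ' : Finset ℕ} (hsub : occ' ⊆ occ)
    (h : firstFree m a occ = some p) :
    ∃ p', firstFree m a occ' = some p' ∧ insert p' occ' ⊆ insert p occ := by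
  obtain ⟨hap, hpm, hp, hbelow⟩ := firstFree_eq_some_iff.1 h
  cases h' : firstFree m a occ' with
  | none => exact absurd (hsub (firstFree_eq_none_iff.1 h' p hap hpm)) hp
  | some p' =>
    obtain ⟨hap', -, -, hbelow'⟩ := firstFree_eq_some_iff.1 h'
    have hp'p : p' ≤ p := by
      by_contra! hlt
      exact hp (hsub (hbelow' p hap hlt))
    refine ⟨p', rfl, Finset.insert_subset_iff.2 ⟨?_, hsub.trans (Finset.subset_insert _ _)⟩⟩
    rcases hp'p.lt_or_eq with hlt | rfl
    · exact Finset.mem_insert_of_mem (hbelow p' hap' hlt)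
    · exact Finset.mem_insert_self _ _

theorem firstFree_insert_of_ne {q : ℕ} (h : firstFree m a occ = some p) (hqp : q ≠ p) :
    firstFree m a (insert q occ) = some p := by
  obtain ⟨hap, hpm, hp, hbelow⟩ := firstFree_eq_some_iff.1 h
  exact firstFree_eq_some_iff.2 ⟨hap, hpm, by simp [hp, Ne.symm hqp],
    fun j h₁ h₂ => Finset.mem_insert_of_mem (hbelow j h₁ h₂)⟩

theorem firstFree_insert_self (h : firstFree m a occ = some p) :
    firstFree m a (insert p occ) = firstFree m (p + 1) occ := by
  obtain ⟨hap, -, hp, hbelow⟩ := firstFree_eq_some_iff.1 h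
  ext r
  simp only [firstFree_eq_some_iff, Finset.mem_insert, not_or]
  constructor
  · rintro ⟨har, hrm, ⟨hrp, hr⟩, hbelow'⟩
    have hpr : p < r := by
      by_contra! hrp'
      exact hr (hbelow r har (by omega))
    exact ⟨hpr, hrm, hr, fun j h₁ h₂ => (hbelow' j (by omega) h₂).resolve_left (by omega)⟩
  · rintro ⟨hpr, hrm, hr, hbelow'⟩
    refine ⟨by omega, hrm, ⟨by omega, hr⟩, fun j h₁ h₂ => ?_⟩
    rcases lt_trichotomy j p with hjp | rfl | hjp
    · exact Or.inr (hbelow j h₁ hjp)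
    · exact Or.inl rfl
    · exact Or.inr (hbelow' j hjp h₂)

end FirstFree

theorem park_isSome_of_sublist {m : ℕ} {l' l : List ℕ} (hsub : l'.Sublist l) :
    ∀ {occ' occ : Finset ℕ}, occ' ⊆ occ →
      (park m l occ).isSome → (park m l' occ').isSome := by
  induction hsub with
  | slnil => intro _ _ _ _; rfl
  | @cons l' l a _ ih =>
    intro occ' occ hocc hl
    rw [park_cons] at hl
    cases hp : firstFree m a occ with
    | none => simp [hp] at hl
    | some p =>
      rw [hp, Option.bind_some, Option.isSome_map] at hl
      exact ih (hocc.trans (Finset.subset_insert _ _)) hl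
  | @cons_cons l' l a _ ih =>
    intro occ' occ hocc hl
    rw [park_cons] at hl
    cases hp : firstFree m a occ with
    | none => simp [hp] at hl
    | some p =>
      rw [hp, Option.bind_some, Option.isSome_map] at hl
      obtain ⟨p', hp', hocc'⟩ := exists_firstFree_of_subset hocc hp
      rw [park_cons, hp', Option.bind_some, Option.isSome_map]
      exact ih hocc' hl

def parkOutcome (m : ℕ) (l : List ℕ) (occ : Finset ℕ) : Option (Finset ℕ × ℕ) :=
  (park m l occ).map fun ps => (ps.toFinset, ((ps.zip l).map fun x => x.1 - x.2).sum)

section ParkOutcome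

variable {m : ℕ}

theorem isSome_parkOutcome (l : List ℕ) (occ : Finset ℕ) :
    (parkOutcome m l occ).isSome = (park m l occ).isSome :=
  Option.isSome_map

theorem parkOutcome_nil (occ : Finset ℕ) : parkOutcome m [] occ = some (∅, 0) := rfl

theorem parkOutcome_cons (a : ℕ) (l : List ℕ) (occ : Finset ℕ) :
    parkOutcome m (a :: l) occ = (firstFree m a occ).bind fun p =>
      (parkOutcome m l (insert p occ)).map fun r => (insert p r.1, (p - a) + r.2) := by
  rw [parkOutcome, park_cons]
  cases firstFree m a occ with
  | none => rfl
  | some p =>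
    simp only [Option.bind_some, parkOutcome, Option.map_map]
    cases park m l (insert p occ) <;> simp [List.zip_cons_cons]

theorem disp_eq_of_parkOutcome {l : List ℕ} {o : Finset ℕ} {d : ℕ}
    (h : parkOutcome m l ∅ = some (o, d)) : disp m l = d := by
  rw [parkOutcome] at h
  rw [disp]
  cases hp : park m l ∅ <;> simp_all

theorem occSet_eq_of_parkOutcome {l : List ℕ} {o : Finset ℕ} {d : ℕ}
    (h : parkOutcome m l ∅ = some (o, d)) : occSet m l = o := by
  rw [parkOutcome] at h
  rw [occSet]
  cases hp : park m l ∅ <;> simp_all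

theorem parkOutcome_swap (x y : ℕ) (l : List ℕ) (occ : Finset ℕ) :
    parkOutcome m (y :: x :: l) occ = parkOutcome m (x :: y :: l) occ := by
  simp only [parkOutcome_cons]
  rcases hy : firstFree m y occ with _ | q <;> rcases hx : firstFree m x occ with _ | p
  · rfl
  · simp [firstFree_eq_none_of_subset (Finset.subset_insert p occ) hy]
  · simp [firstFree_eq_none_of_subset (Finset.subset_insert q occ) hx]
  · have hyq := (firstFree_eq_some_iff.1 hy).1
    have hxp := (firstFree_eq_some_iff.1 hx).1
    simp only [Option.bind_some]
    by_cases hpq : p = q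
    · subst hpq
      rw [firstFree_insert_self hx, firstFree_insert_self hy]
      rcases hr : firstFree m (p + 1) occ with _ | r
      · rfl
      · have hpr := (firstFree_eq_some_iff.1 hr).1
        simp only [Option.bind_some, Option.map_map]
        congr 1
        funext R
        simp only [Function.comp_apply, Prod.mk.injEq, true_and]
        omega
    · rw [firstFree_insert_of_ne hx (Ne.symm hpq), firstFree_insert_of_ne hy hpq,
        Option.bind_some, Option.bind_some, Option.map_map, Option.map_map,
        Finset.insert_comm p q]
      congr 1
      funext R
      simp only [Function.comp_apply, Finset.insert_comm p q, add_left_comm]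

theorem parkOutcome_perm {l₁ l₂ : List ℕ} (h : l₁.Perm l₂) (occ : Finset ℕ) :
    parkOutcome m l₁ occ = parkOutcome m l₂ occ := by
  induction h generalizing occ with
  | nil => rfl
  | cons a _ ih => simp only [parkOutcome_cons, ih]
  | swap x y l => exact parkOutcome_swap x y l occ
  | trans _ _ ih₁ ih₂ => rw [ih₁, ih₂]

theorem parkOutcome_append (l₁ l₂ : List ℕ) (occ : Finset ℕ) :
    parkOutcome m (l₁ ++ l₂) occ = (parkOutcome m l₁ occ).bind fun r =>
      (parkOutcome m l₂ (occ ∪ r.1)).map fun s => (r.1 ∪ s.1, r.2 + s.2) := by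
  induction l₁ generalizing occ with
  | nil => simp [parkOutcome_nil]
  | cons a l₁ ih =>
    rw [List.cons_append, parkOutcome_cons, parkOutcome_cons]
    cases firstFree m a occ with
    | none => rfl
    | some p =>
      simp only [Option.bind_some, ih]
      cases parkOutcome m l₁ (insert p occ) with
      | none => rfl
      | some r =>
        simp only [Option.bind_some, Option.map_some, Option.map_map]
        rw [Finset.insert_union, Finset.union_insert]
        congr 1
        funext s
        simp only [Function.comp_apply, Finset.insert_union, add_assoc]

end ParkOutcome

theorem park_isSome_of_subperm {m : ℕ} {l' l : List ℕ} (h : l'.Subperm l) {occ : Finset ℕ}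
    (hl : (park m l occ).isSome) : (park m l' occ).isSome := by
  obtain ⟨l'', hperm, hsub⟩ := h
  rw [← isSome_parkOutcome, ← parkOutcome_perm hperm, isSome_parkOutcome]
  exact park_isSome_of_sublist hsub subset_rfl hl

theorem IsPF.park_coalition_isSome {n : ℕ} {α : Fin n → ℕ} (h : IsPF n n (List.ofFn α))
    (T : Finset (Fin n)) : (park n ((T.sort (· ≤ ·)).map α) ∅).isSome := by
  refine park_isSome_of_subperm ?_ h.2.2
  obtain ⟨l, hperm, hsub⟩ :=
    (Finset.sort_nodup T (· ≤ ·)).subperm fun j _ => List.mem_finRange j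
  exact ⟨l.map α, hperm.map α, List.ofFn_eq_map ▸ hsub.map α⟩

/-- marginal displacement via contiguous occupied blocks: if after
the cars in `S` park, the preferred spot `a_i` is unoccupied, then
`c_α(S ∪ {i}) = c_α(S)`; if `a_i` lies in a maximal contiguous block of
occupied spots ending at spot `t` (so all spots `a_i, …, t` are occupied and
spot `t+1` is not), then `c_α(S ∪ {i}) − c_α(S) = t − a_i + 1`. -/
theorem stmt13 (n : ℕ) (α : Fin n → ℕ) (h : IsPF n n (List.ofFn α))
    (i : Fin n) (S : Finset (Fin n)) (hiS : i ∉ S) :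
    (α i ∉ occSet n ((S.sort (· ≤ ·)).map α) →
      gameCost n α (insert i S) = gameCost n α S) ∧
    (∀ t : ℕ, α i ≤ t →
      (∀ j, α i ≤ j → j ≤ t → j ∈ occSet n ((S.sort (· ≤ ·)).map α)) →
      t + 1 ∉ occSet n ((S.sort (· ≤ ·)).map α) →
      gameCost n α (insert i S) = gameCost n α S + (t - α i + 1)) := by
  set L := (S.sort (· ≤ ·)).map α
  have hperm : (((insert i S).sort (· ≤ ·)).map α).Perm (L ++ [α i]) := by
    have : ((insert i S).sort (· ≤ ·)).Perm (i :: S.sort (· ≤ ·)) := by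
      rw [← Multiset.coe_eq_coe, ← Multiset.cons_coe, Finset.sort_eq, Finset.sort_eq,
        Finset.insert_val_of_notMem hiS]
    exact (this.map α).trans (List.perm_append_singleton _ _).symm
  obtain ⟨⟨o, d⟩, hL⟩ := Option.isSome_iff_exists.1
    ((isSome_parkOutcome _ _).trans (h.park_coalition_isSome S))
  have hins : parkOutcome n (((insert i S).sort (· ≤ ·)).map α) ∅ =
      (firstFree n (α i) o).map fun p => (insert p o, d + (p - α i)) := by
    rw [parkOutcome_perm hperm, parkOutcome_append, hL]
    simp only [Option.bind_some, parkOutcome_cons, parkOutcome_nil, Finset.empty_union]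
    cases firstFree n (α i) o <;> simp
  obtain ⟨p, hp⟩ : ∃ p, firstFree n (α i) o = some p := by
    have hparks := (isSome_parkOutcome _ _).trans (h.park_coalition_isSome (insert i S))
    rw [hins, Option.isSome_map] at hparks
    exact Option.isSome_iff_exists.1 hparks
  rw [hp, Option.map_some] at hins
  obtain ⟨hap, -, hpo, hbelow⟩ := firstFree_eq_some_iff.1 hp
  rw [gameCost, gameCost, disp_eq_of_parkOutcome hins, disp_eq_of_parkOutcome hL,
    occSet_eq_of_parkOutcome hL]
  refine ⟨fun hfree => ?_, fun t hat hblock hnext => ?_⟩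
  · have hpa : p = α i := by
      by_contra hne
      exact hfree (hbelow _ le_rfl (by omega))
    simp [hpa]
  · have htp : t < p := by
      by_contra
      exact hpo (hblock p hap (by omega))
    have hpt : p ≤ t + 1 := by
      by_contra
      exact hnext (hbelow (t + 1) (by omega) (by omega))
    omega
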